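/- arXiv:1210.7961 — 4 statements merged into one kernel-verified Lean document; each statement's English description precedes it below -/
import Mathlib

section
/- If L_1 and L_2 are non-proportional nonzero linear forms and 2k ≥ d, then dim_F (V_1 ∩ V_2) = binomial(2k-d+n, n), where V_i = { L_i^{d-k} F : F ∈ R_k } ⊆ R_d. -/
/-!
Since `L₂` is irreducible and does not divide `L₁`, the powers `L₁ ^ (d - k)` and `L₂ ^ (d - k)`
are relatively prime in the factorial ring `F[X₀, …, Xₙ]`. So a form
`L₁ ^ (d - k) * G₁ = L₂ ^ (d - k) * G₂` is divisible by `L₁ ^ (d - k) * L₂ ^ (d - k)`, with a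
cofactor of degree `2k - d`: the intersection is `L₁ ^ (d - k) * L₂ ^ (d - k) * R_{2k-d}`, which is
isomorphic to `R_{2k-d}`, of dimension the number of monomials of degree `2k - d` in `n + 1`
variables.
-/

namespace MvPolynomial

variable {σ R : Type*}

section Graded

variable [CommSemiring R]

attribute [local instance] MvPolynomial.gradedAlgebra

theorem homogeneousComponent_add_mul_of_isHomogeneous {P : MvPolynomial σ R} {a : ℕ}
    (hP : P.IsHomogeneous a) (b : ℕ) (Q : MvPolynomial σ R) :
    homogeneousComponent (a + b) (P * Q) = P * homogeneousComponent b Q := by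
  simpa only [DirectSum.decompose, Equiv.coe_fn_mk, decomposition.decompose'_apply] using
    DirectSum.coe_decompose_mul_add_of_left_mem (𝒜 := homogeneousSubmodule σ R) (j := b)
      (b := Q) hP

end Graded

theorem finrank_homogeneousSubmodule [Fintype σ] [CommRing R] [Nontrivial R] (n : ℕ) :
    Module.finrank R (homogeneousSubmodule σ R n) = (Fintype.card σ + n - 1).choose n := by
  classical
  have hsupp : {d : σ →₀ ℕ | d.degree = n} =
      ↑(Finset.univ.finsuppAntidiag n : Finset (σ →₀ ℕ)) := by
    ext d; simp [Finsupp.degree_eq_sum]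
  rw [homogeneousSubmodule_eq_finsupp_supported, hsupp]
  refine (Module.finrank_eq_nat_card_basis (basisRestrictSupport R _)).trans ?_
  rw [Nat.card_coe_set_eq, Set.ncard_coe_finset, Finset.card_finsuppAntidiag_nat_eq_choose,
    Finset.card_univ]

section Domain

variable [CommRing R] [IsDomain R]

theorem IsHomogeneous.of_mul_left {P Q : MvPolynomial σ R} {a b : ℕ} (hP : P.IsHomogeneous a)
    (hP0 : P ≠ 0) (hPQ : (P * Q).IsHomogeneous (a + b)) : Q.IsHomogeneous b := by
  have h : P * homogeneousComponent b Q = P * Q := by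
    rw [← homogeneousComponent_add_mul_of_isHomogeneous hP, homogeneousComponent_of_mem hPQ,
      if_pos rfl]
  rw [← mul_left_cancel₀ hP0 h]
  exact homogeneousComponent_isHomogeneous b Q

theorem IsHomogeneous.exists_eq_smul_of_dvd {P Q : MvPolynomial σ R} {a : ℕ}
    (hP : P.IsHomogeneous a) (hQ : Q.IsHomogeneous a) (hQ0 : Q ≠ 0) (h : Q ∣ P) :
    ∃ c : R, P = c • Q := by
  obtain ⟨U, rfl⟩ := h
  have hU : U.IsHomogeneous 0 := hQ.of_mul_left hQ0 hP
  obtain ⟨c, rfl⟩ : ∃ c, U = C c :=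
    ⟨_, totalDegree_eq_zero_iff_eq_C.mp ((totalDegree_zero_iff_isHomogeneous _).mpr hU)⟩
  exact ⟨c, by rw [smul_eq_C_mul, mul_comm]⟩

variable [UniqueFactorizationMonoid R]

theorem map_mulLeft_inf_map_mulLeft {A B : MvPolynomial σ R} {a b : ℕ}
    (hA : A.IsHomogeneous a) (hB : B.IsHomogeneous b) (hB0 : B ≠ 0) (hAB : IsRelPrime A B)
    (r : ℕ) :
    (homogeneousSubmodule σ R (b + r)).map (LinearMap.mulLeft R A) ⊓
        (homogeneousSubmodule σ R (a + r)).map (LinearMap.mulLeft R B) =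
      (homogeneousSubmodule σ R r).map (LinearMap.mulLeft R (A * B)) := by
  apply le_antisymm
  · rintro _ ⟨⟨G, hG, rfl⟩, ⟨G', -, hGG'⟩⟩
    obtain ⟨H, rfl⟩ : B ∣ G := hAB.symm.dvd_of_dvd_mul_left ⟨G', hGG'.symm⟩
    exact ⟨H, hB.of_mul_left hB0 hG, mul_assoc A B H⟩
  · rintro _ ⟨H, hH, rfl⟩
    refine ⟨⟨B * H, hB.mul hH, (mul_assoc A B H).symm⟩, ⟨A * H, hA.mul hH, ?_⟩⟩
    simp only [LinearMap.mulLeft_apply]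
    ring

end Domain

section Field

variable {K : Type*} [Field K]

theorem irreducible_of_isHomogeneous_one {L : MvPolynomial σ K} (hL : L.IsHomogeneous 1)
    (hL0 : L ≠ 0) : Irreducible L :=
  irreducible_of_totalDegree_eq_one (hL.totalDegree hL0) fun x hx => by
    obtain ⟨d, hd⟩ := exists_coeff_ne_zero hL0
    exact isUnit_iff_ne_zero.mpr fun hx0 => hd (zero_dvd_iff.mp (hx0 ▸ hx d))

theorem isRelPrime_of_isHomogeneous_one {L₁ L₂ : MvPolynomial σ K} (hL₁ : L₁.IsHomogeneous 1)
    (hL₂ : L₂.IsHomogeneous 1) (hL₂0 : L₂ ≠ 0) (h : ¬∃ c : K, L₁ = c • L₂) :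
    IsRelPrime L₁ L₂ :=
  ((irreducible_of_isHomogeneous_one hL₂ hL₂0).isRelPrime_iff_not_dvd.mpr fun hdvd =>
    h (hL₁.exists_eq_smul_of_dvd hL₂ hL₂0 hdvd)).symm

end Field

end MvPolynomial

open MvPolynomial

theorem osculating_intersection_dim_general (F : Type*) [Field F] (n d k : ℕ)
    (hkd : k < d) (h2k : d ≤ 2 * k)
    (L₁ L₂ : MvPolynomial (Fin (n+1)) F)
    (hL₁ : L₁ ∈ MvPolynomial.homogeneousSubmodule (Fin (n+1)) F 1)
    (hL₂ : L₂ ∈ MvPolynomial.homogeneousSubmodule (Fin (n+1)) F 1)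
    (hL₂0 : L₂ ≠ 0)
    (hprop : ¬ ∃ c : F, L₁ = c • L₂) :
    Module.finrank F
      (((MvPolynomial.homogeneousSubmodule (Fin (n+1)) F k).map
          (LinearMap.mulLeft F (L₁ ^ (d - k)))) ⊓
        ((MvPolynomial.homogeneousSubmodule (Fin (n+1)) F k).map
          (LinearMap.mulLeft F (L₂ ^ (d - k)))) : Submodule F (MvPolynomial (Fin (n+1)) F)) =
      (2 * k - d + n).choose n := by
  have hL₁0 : L₁ ≠ 0 := fun h => hprop ⟨0, by rw [h, zero_smul]⟩
  obtain ⟨m, r, hm, rfl, hr⟩ : ∃ m r, d - k = m ∧ k = m + r ∧ 2 * k - d = r :=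
    ⟨d - k, 2 * k - d, rfl, by omega, rfl⟩
  have hpow {L : MvPolynomial (Fin (n+1)) F} (hL : L.IsHomogeneous 1) :
      (L ^ m).IsHomogeneous m := by
    simpa using hL.pow m
  have hcoprime : IsRelPrime (L₁ ^ m) (L₂ ^ m) :=
    (isRelPrime_of_isHomogeneous_one hL₁ hL₂ hL₂0 hprop).pow
  rw [hm, hr, map_mulLeft_inf_map_mulLeft (hpow hL₁) (hpow hL₂) (pow_ne_zero m hL₂0) hcoprime,
    ← LinearEquiv.finrank_eq (Submodule.equivMapOfInjective _
      (mul_right_injective₀ (mul_ne_zero (pow_ne_zero m hL₁0) (pow_ne_zero m hL₂0))) _),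
    finrank_homogeneousSubmodule, Fintype.card_fin, show n + 1 + r - 1 = r + n by omega,
    Nat.choose_symm_add]

theorem osculating_intersection_dim (F : Type*) [Field F] (n d k : ℕ) (hn : 1 ≤ n)
    (hk : 1 ≤ k) (hkd : k < d) (h2k : d ≤ 2 * k)
    (L₁ L₂ : MvPolynomial (Fin (n+1)) F)
    (hL₁ : L₁ ∈ MvPolynomial.homogeneousSubmodule (Fin (n+1)) F 1)
    (hL₂ : L₂ ∈ MvPolynomial.homogeneousSubmodule (Fin (n+1)) F 1)
    (hL₁0 : L₁ ≠ 0) (hL₂0 : L₂ ≠ 0)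
    (hprop : ¬ ∃ c : F, L₁ = c • L₂) :
    Module.finrank F
      (((MvPolynomial.homogeneousSubmodule (Fin (n+1)) F k).map
          (LinearMap.mulLeft F (L₁ ^ (d - k)))) ⊓
        ((MvPolynomial.homogeneousSubmodule (Fin (n+1)) F k).map
          (LinearMap.mulLeft F (L₂ ^ (d - k)))) : Submodule F (MvPolynomial (Fin (n+1)) F)) =
      (2 * k - d + n).choose n :=
  osculating_intersection_dim_general F n d k hkd h2k L₁ L₂ hL₁ hL₂ hL₂0 hprop
end

section
/- The map sending a nonzero linear form L (up to scalar) to the subspace L^{d-k} R_k of R_d is injective: if L_1^{d-k} R_k = L_2^{d-k} R_k as subspaces, then L_1 and L_2 are proportional. -/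
/-!
`L₁ ^ d = L₁ ^ (d - k) * L₁ ^ k` lies in `L₁ ^ (d - k) R_k = L₂ ^ (d - k) R_k`, so `L₂ ∣ L₁ ^ d`.
A nonzero linear form is irreducible, hence prime in the factorial ring `F[X₀, …, Xₙ]`, so
`L₂ ∣ L₁`; two irreducibles dividing each other are associated, and the units of `F[X₀, …, Xₙ]`
are the nonzero constants.
-/

open MvPolynomial

namespace MvPolynomial

variable {σ K : Type*} [Field K]

theorem irreducible_of_isHomogeneous_one_s12 {p : MvPolynomial σ K} (hp : p.IsHomogeneous 1)
    (hp0 : p ≠ 0) : Irreducible p := by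
  refine irreducible_of_totalDegree_eq_one (hp.totalDegree hp0) fun x hx => ?_
  obtain ⟨m, hm⟩ := ne_zero_iff.mp hp0
  exact (ne_zero_of_dvd_ne_zero hm (hx m)).isUnit

theorem exists_smul_eq_of_associated {p q : MvPolynomial σ K} (h : Associated p q) :
    ∃ c : K, c ≠ 0 ∧ q = c • p := by
  obtain ⟨u, rfl⟩ := h
  obtain ⟨c, hc, hu⟩ := isUnit_iff_eq_C_of_isReduced.mp u.isUnit
  exact ⟨c, hc.ne_zero, by rw [hu, smul_eq_C_mul, mul_comm]⟩

theorem pow_mem_map_mulLeft_pow {R : Type*} [CommSemiring R] {L : MvPolynomial σ R}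
    (hL : L.IsHomogeneous 1) {k d : ℕ} (hkd : k ≤ d) :
    L ^ d ∈ (homogeneousSubmodule σ R k).map (LinearMap.mulLeft R (L ^ (d - k))) :=
  ⟨L ^ k, by simpa using hL.pow k, by simp [← pow_add, Nat.sub_add_cancel hkd]⟩

end MvPolynomial

theorem osculating_map_injective_general (F : Type*) [Field F] (n d k : ℕ)
    (hkd : k < d)
    (L₁ L₂ : MvPolynomial (Fin (n+1)) F)
    (hL₁ : L₁ ∈ MvPolynomial.homogeneousSubmodule (Fin (n+1)) F 1)
    (hL₂ : L₂ ∈ MvPolynomial.homogeneousSubmodule (Fin (n+1)) F 1)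
    (hL₁0 : L₁ ≠ 0) (hL₂0 : L₂ ≠ 0)
    (heq : (MvPolynomial.homogeneousSubmodule (Fin (n+1)) F k).map
        (LinearMap.mulLeft F (L₁ ^ (d - k))) =
      (MvPolynomial.homogeneousSubmodule (Fin (n+1)) F k).map
        (LinearMap.mulLeft F (L₂ ^ (d - k)))) :
    ∃ c : F, c ≠ 0 ∧ L₁ = c • L₂ := by
  rw [mem_homogeneousSubmodule] at hL₁ hL₂
  have hirr₁ := irreducible_of_isHomogeneous_one_s12 hL₁ hL₁0
  have hirr₂ := irreducible_of_isHomogeneous_one_s12 hL₂ hL₂0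
  obtain ⟨Q, -, hQ⟩ := heq ▸ pow_mem_map_mulLeft_pow hL₁ hkd.le
  have hdvd_pow : L₂ ∣ L₁ ^ d :=
    (dvd_pow_self L₂ (Nat.sub_ne_zero_of_lt hkd)).trans ⟨Q, hQ.symm⟩
  have hdvd : L₂ ∣ L₁ := hirr₂.prime.dvd_of_dvd_pow hdvd_pow
  exact exists_smul_eq_of_associated (hirr₂.associated_of_dvd hirr₁ hdvd)

theorem osculating_map_injective (F : Type*) [Field F] (n d k : ℕ) (hn : 1 ≤ n)
    (hk : 1 ≤ k) (hkd : k < d)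
    (L₁ L₂ : MvPolynomial (Fin (n+1)) F)
    (hL₁ : L₁ ∈ MvPolynomial.homogeneousSubmodule (Fin (n+1)) F 1)
    (hL₂ : L₂ ∈ MvPolynomial.homogeneousSubmodule (Fin (n+1)) F 1)
    (hL₁0 : L₁ ≠ 0) (hL₂0 : L₂ ≠ 0)
    (heq : (MvPolynomial.homogeneousSubmodule (Fin (n+1)) F k).map
        (LinearMap.mulLeft F (L₁ ^ (d - k))) =
      (MvPolynomial.homogeneousSubmodule (Fin (n+1)) F k).map
        (LinearMap.mulLeft F (L₂ ^ (d - k)))) :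
    ∃ c : F, c ≠ 0 ∧ L₁ = c • L₂ :=
  osculating_map_injective_general F n d k hkd L₁ L₂ hL₁ hL₂ hL₁0 hL₂0 heq
end

section
/- The code C_{k,n,d} consisting of the subspaces L^{d-k} R_k of R_d, as L ranges over nonzero linear forms over F_q up to scalar, has exactly 1 + q + ... + q^n elements. -/
/-!
If `L^m R_k = L'^m R_k` with `m ≥ 1`, then `L'^(m+k)` is a multiple of `L^m`, so `L'` vanishes
at every zero of `L` in `F^(n+1)`. Identifying linear forms with functionals on `F^(n+1)`, this
kernel inclusion forces `L'` to be a scalar multiple of `L`; conversely scaling `L` does not change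
`L^m R_k`. Hence the code is in bijection with the points of the projective space
`ℙ(R_1) ≅ ℙ^n(F_q)`, which has `1 + q + ⋯ + q^n` points.
-/

namespace MvPolynomial

section Osculating

variable {σ R : Type*} [CommSemiring R]

/-- The subspace `L^m R_k` of `R_(m+k)`. -/
noncomputable def osculatingSpace (k m : ℕ) (L : MvPolynomial σ R) :
    Submodule R (MvPolynomial σ R) :=
  (homogeneousSubmodule σ R k).map (LinearMap.mulLeft R (L ^ m))

lemma pow_add_mem_osculatingSpace {k : ℕ} (m : ℕ) {L : MvPolynomial σ R}
    (hL : L ∈ homogeneousSubmodule σ R 1) : L ^ (m + k) ∈ osculatingSpace k m L := by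
  refine ⟨L ^ k, ?_, (pow_add L m k).symm⟩
  simpa using Submodule.pow_mem_pow _ hL k

lemma eval_eq_zero_of_osculatingSpace_eq [NoZeroDivisors R] {k m : ℕ} (hm : m ≠ 0)
    {L L' : MvPolynomial σ R} (hL' : L' ∈ homogeneousSubmodule σ R 1)
    (h : osculatingSpace k m L = osculatingSpace k m L') (v : σ → R) (hv : eval v L = 0) :
    eval v L' = 0 := by
  obtain ⟨P, -, hP⟩ : L' ^ (m + k) ∈ osculatingSpace k m L :=
    h ▸ pow_add_mem_osculatingSpace m hL'
  have := congrArg (eval v) hP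
  simp only [LinearMap.mulLeft_apply, map_mul, map_pow, hv, zero_pow hm, zero_mul] at this
  exact pow_eq_zero_iff (by omega) |>.mp this.symm

lemma osculatingSpace_smul {F : Type*} [Field F] (k m : ℕ) {c : F} (hc : c ≠ 0)
    (L : MvPolynomial σ F) : osculatingSpace k m (c • L) = osculatingSpace k m L := by
  rw [osculatingSpace, osculatingSpace,
    ← Submodule.map_smul (LinearMap.mulLeft F (L ^ m)) _ _ (pow_ne_zero m hc), smul_pow]
  congr 1
  ext
  simp

end Osculating

section LinearForms

variable {σ F : Type*} [Fintype σ] [Field F]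

section
variable [DecidableEq σ]

noncomputable def linearForm : Module.Dual F (σ → F) →ₗ[F] MvPolynomial σ F where
  toFun φ := ∑ i, φ (Pi.single i 1) • X i
  map_add' φ ψ := by simp only [LinearMap.add_apply, add_smul, Finset.sum_add_distrib]
  map_smul' c φ := by simp only [LinearMap.smul_apply, smul_eq_mul, mul_smul, Finset.smul_sum,
    RingHom.id_apply]

lemma eval_linearForm (φ : Module.Dual F (σ → F)) (v : σ → F) :
    eval v (linearForm φ) = φ v := by
  conv_rhs => rw [← Finset.univ_sum_single v, map_sum]
  simp only [linearForm, LinearMap.coe_mk, AddHom.coe_mk, map_sum]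
  refine Finset.sum_congr rfl fun i _ => ?_
  rw [smul_eval, eval_X, mul_comm, ← smul_eq_mul, ← map_smul, ← Pi.single_smul', smul_eq_mul,
    mul_one]

lemma linearForm_injective : Function.Injective (linearForm (σ := σ) (F := F)) := fun φ ψ h =>
  LinearMap.ext fun v => by rw [← eval_linearForm, h, eval_linearForm]

lemma range_linearForm :
    LinearMap.range (linearForm (σ := σ) (F := F)) = homogeneousSubmodule σ F 1 := by
  apply le_antisymm
  · rintro _ ⟨φ, rfl⟩
    exact Submodule.sum_mem _ fun i _ => Submodule.smul_mem _ _ (isHomogeneous_X F i)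
  · rw [homogeneousSubmodule_one_eq_span_X, Submodule.span_le]
    rintro _ ⟨i, rfl⟩
    exact ⟨LinearMap.proj i, by simp [linearForm, Pi.single_apply]⟩

end

lemma finrank_homogeneousSubmodule_one :
    Module.finrank F (homogeneousSubmodule σ F 1) = Fintype.card σ := by
  classical
  rw [← range_linearForm, LinearMap.finrank_range_of_inj linearForm_injective,
    Subspace.dual_finrank_eq, Module.finrank_fintype_fun_eq_card]

lemma exists_smul_eq_of_forall_eval_eq_zero {L L' : MvPolynomial σ F}
    (hL : L ∈ homogeneousSubmodule σ F 1) (hL' : L' ∈ homogeneousSubmodule σ F 1)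
    (h : ∀ v, eval v L = 0 → eval v L' = 0) : ∃ c : F, c • L = L' := by
  classical
  rw [← range_linearForm] at hL hL'
  obtain ⟨⟨φ, rfl⟩, ⟨ψ, rfl⟩⟩ := And.intro hL hL'
  have hker : ⨅ _ : Unit, LinearMap.ker φ ≤ LinearMap.ker ψ := fun v hv => by
    simpa [eval_linearForm] using h v (by simpa [eval_linearForm] using hv)
  obtain ⟨c, hc⟩ := Submodule.mem_span_singleton.mp
    (by simpa using mem_span_of_iInf_ker_le_ker hker)
  exact ⟨c, by rw [← map_smul, hc]⟩

end LinearForms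

section Projective

open scoped LinearAlgebra.Projectivization

variable {σ F : Type*} [Field F]

noncomputable def projectiveOsculatingSpace (k m : ℕ) :
    ℙ F (homogeneousSubmodule σ F 1) → Submodule F (MvPolynomial σ F) :=
  Projectivization.lift (fun L => osculatingSpace k m (L : MvPolynomial σ F)) <| by
    rintro ⟨L, hL⟩ L' t rfl
    have ht : t ≠ 0 := by rintro rfl; simp at hL
    exact osculatingSpace_smul k m ht _

lemma range_projectiveOsculatingSpace (k m : ℕ) :
    Set.range (projectiveOsculatingSpace (σ := σ) (F := F) k m) =
      {V | ∃ L, L ∈ homogeneousSubmodule σ F 1 ∧ L ≠ 0 ∧ V = osculatingSpace k m L} := by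
  ext V
  constructor
  · rintro ⟨p, rfl⟩
    induction p using Projectivization.ind with
    | h L hL => exact ⟨L, L.2, by simpa using hL, rfl⟩
  · rintro ⟨L, hL, hL0, rfl⟩
    exact ⟨Projectivization.mk F ⟨L, hL⟩ (by simpa using hL0), rfl⟩

lemma projectiveOsculatingSpace_injective [Fintype σ] {k m : ℕ} (hm : m ≠ 0) :
    Function.Injective (projectiveOsculatingSpace (σ := σ) (F := F) k m) := by
  intro p p'
  induction p using Projectivization.ind with | h L hL => ?_
  induction p' using Projectivization.ind with | h L' hL' => ?_
  intro h
  obtain ⟨c, hc⟩ := exists_smul_eq_of_forall_eval_eq_zero L'.2 L.2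
    (eval_eq_zero_of_osculatingSpace_eq hm L.2 h.symm)
  exact (Projectivization.mk_eq_mk_iff' F _ _ hL hL').mpr ⟨c, Subtype.ext hc⟩

lemma card_projectivization_homogeneousSubmodule_one [Fintype σ] [Fintype F] :
    Nat.card (ℙ F (homogeneousSubmodule σ F 1)) =
      ∑ i ∈ Finset.range (Fintype.card σ), Fintype.card F ^ i := by
  rw [Projectivization.card_of_finrank F _ finrank_homogeneousSubmodule_one,
    Nat.card_eq_fintype_card]

end Projective

end MvPolynomial

open MvPolynomial

theorem osculating_code_card_general (F : Type*) [Field F] [Fintype F] (n d k q : ℕ)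
    (hkd : k < d) (hq : Fintype.card F = q) :
    Set.ncard {V : Submodule F (MvPolynomial (Fin (n+1)) F) |
        ∃ L : MvPolynomial (Fin (n+1)) F,
          L ∈ MvPolynomial.homogeneousSubmodule (Fin (n+1)) F 1 ∧ L ≠ 0 ∧
          V = (MvPolynomial.homogeneousSubmodule (Fin (n+1)) F k).map
            (LinearMap.mulLeft F (L ^ (d - k)))} =
      ∑ i ∈ Finset.range (n+1), q ^ i := by
  calc _ = (Set.range (projectiveOsculatingSpace (σ := Fin (n+1)) (F := F) k (d - k))).ncard := by
        rw [range_projectiveOsculatingSpace]; rfl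
    _ = _ := Set.ncard_range_of_injective (projectiveOsculatingSpace_injective (by omega))
    _ = _ := by rw [card_projectivization_homogeneousSubmodule_one, Fintype.card_fin, hq]

theorem osculating_code_card (F : Type*) [Field F] [Fintype F] (n d k q : ℕ)
    (hn : 1 ≤ n) (hk : 1 ≤ k) (hkd : k < d) (hq : Fintype.card F = q) :
    Set.ncard {V : Submodule F (MvPolynomial (Fin (n+1)) F) |
        ∃ L : MvPolynomial (Fin (n+1)) F,
          L ∈ MvPolynomial.homogeneousSubmodule (Fin (n+1)) F 1 ∧ L ≠ 0 ∧
          V = (MvPolynomial.homogeneousSubmodule (Fin (n+1)) F k).map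
            (LinearMap.mulLeft F (L ^ (d - k)))} =
      ∑ i ∈ Finset.range (n+1), q ^ i :=
  osculating_code_card_general F n d k q hkd hq
end

section
/- The code C_{k,n,d} is equidistant: any two distinct elements V_1 ≠ V_2 of C_{k,n,d} have the same distance dist(V_1,V_2), namely 2(binomial(k+n,n) - binomial(2k-d+n,n)) if 2k ≥ d and 2·binomial(k+n,n) if 2k < d. -/
/-!
Write `Vᵢ = Lᵢ ^ m • R_k` with `m = d - k`. Associated linear forms give the same code, so
`V₁ ≠ V₂` makes the irreducible forms `L₁, L₂` non-associated, hence `L₁ ^ m` and `L₂ ^ m`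
coprime. An element of `V₁ ⊓ V₂` is then divisible by `L₁ ^ m * L₂ ^ m`, and the cofactor of a
homogeneous polynomial by a homogeneous one is homogeneous of the difference of the degrees; so
`V₁ ⊓ V₂ = L₁ ^ m * L₂ ^ m • R_(k - m)` when `m ≤ k` and `V₁ ⊓ V₂ = 0` when `k < m`. Multiplication
by a nonzero polynomial is injective, so `dim Vᵢ = dim R_k = (k + n).choose n`, and since
`dim V₁ = dim V₂` the distance is `2 * (dim V₁ - dim (V₁ ⊓ V₂))`.
-/

namespace MvPolynomial

section CommSemiring

variable {σ R : Type*} [CommSemiring R]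

theorem IsHomogeneous.homogeneousComponent_add_mul {p : MvPolynomial σ R} {i : ℕ}
    (hp : p.IsHomogeneous i) (j : ℕ) (q : MvPolynomial σ R) :
    homogeneousComponent (i + j) (p * q) = p * homogeneousComponent j q := by
  let := gradedAlgebra (σ := σ) (R := R)
  simp only [← decomposition.decompose'_apply, DirectSum.Decomposition.decompose'_eq]
  exact DirectSum.coe_decompose_mul_add_of_left_mem _ ((mem_homogeneousSubmodule _ _).mpr hp)

theorem isHomogeneous_of_homogeneousComponent_eq_zero {q : MvPolynomial σ R} {j : ℕ}
    (h : ∀ l ≠ j, homogeneousComponent l q = 0) : q.IsHomogeneous j := by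
  have hq : q = homogeneousComponent j q := by
    ext d
    rw [coeff_homogeneousComponent]
    split_ifs with hd
    · rfl
    · simpa [coeff_homogeneousComponent] using congr_arg (coeff d) (h _ hd)
  rw [hq]
  exact homogeneousComponent_isHomogeneous j q

instance [Finite σ] (k : ℕ) : Module.Finite R (homogeneousSubmodule σ R k) :=
  Module.Finite.iff_fg.mpr (homogeneousSubmodule_fg σ R k)

variable [Fintype σ]

theorem finrank_homogeneousSubmodule_s14 [Nontrivial R] [StrongRankCondition R] (k : ℕ) :
    Module.finrank R (homogeneousSubmodule σ R k) = (Fintype.card σ).multichoose k := by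
  classical
  have hs : {d : σ →₀ ℕ | d.degree = k} =
      ((Finset.univ : Finset σ).finsuppAntidiag k : Set (σ →₀ ℕ)) := by
    ext d
    simp [Finsupp.degree_eq_sum]
  rw [homogeneousSubmodule_eq_finsupp_supported]
  refine (Module.finrank_eq_nat_card_basis (basisRestrictSupport R _)).trans ?_
  rw [hs, Nat.card_coe_set_eq, Set.ncard_coe_finset,
    Finset.card_finsuppAntidiag_nat_eq_multichoose, Finset.card_univ]

end CommSemiring

section CommRing

variable {σ R : Type*} [CommRing R] [IsDomain R] {p q : MvPolynomial σ R} {i : ℕ}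

theorem IsHomogeneous.of_mul_left_s14 (hp : p.IsHomogeneous i) (hp0 : p ≠ 0) {j : ℕ}
    (h : (p * q).IsHomogeneous (i + j)) : q.IsHomogeneous j := by
  refine isHomogeneous_of_homogeneousComponent_eq_zero fun l hl => ?_
  have := hp.homogeneousComponent_add_mul l q
  rw [homogeneousComponent_of_mem ((mem_homogeneousSubmodule _ _).mpr h),
    if_neg (by omega)] at this
  exact (mul_eq_zero.mp this.symm).resolve_left hp0

theorem IsHomogeneous.le_of_mul (hp : p.IsHomogeneous i) {e : ℕ} (h : (p * q).IsHomogeneous e)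
    (hpq : p * q ≠ 0) : i ≤ e := by
  obtain ⟨hp0, hq0⟩ := mul_ne_zero_iff.mp hpq
  have := totalDegree_mul_of_isDomain hp0 hq0
  rw [h.totalDegree hpq, hp.totalDegree hp0] at this
  omega

end CommRing

section Field

variable {σ K : Type*} [Field K]

theorem irreducible_of_mem_homogeneousSubmodule_one {L : MvPolynomial σ K}
    (hL : L ∈ homogeneousSubmodule σ K 1) (hL0 : L ≠ 0) : Irreducible L := by
  refine irreducible_of_totalDegree_eq_one (((mem_homogeneousSubmodule _ _).mp hL).totalDegree hL0)
    fun x hx => ?_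
  obtain ⟨d, hd⟩ := ne_zero_iff.mp hL0
  exact (ne_zero_of_dvd_ne_zero hd (hx d)).isUnit

theorem map_mulLeft_eq_of_associated {P Q : MvPolynomial σ K} (h : Associated P Q)
    (W : Submodule K (MvPolynomial σ K)) :
    W.map (LinearMap.mulLeft K P) = W.map (LinearMap.mulLeft K Q) := by
  obtain ⟨u, rfl⟩ := h
  obtain ⟨c, hc, hu⟩ := isUnit_iff_eq_C_of_isReduced.mp u.isUnit
  have : LinearMap.mulLeft K (P * u) = c • LinearMap.mulLeft K P := by
    refine LinearMap.ext fun x => ?_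
    simp only [LinearMap.mulLeft_apply, LinearMap.smul_apply, hu, smul_eq_C_mul]
    ring
  rw [this, Submodule.map_smul _ _ _ hc.ne_zero]

variable {P Q D x : MvPolynomial σ K}

theorem finrank_map_mulLeft_homogeneousSubmodule [Fintype σ] (hP : P ≠ 0) (k : ℕ) :
    Module.finrank K ((homogeneousSubmodule σ K k).map (LinearMap.mulLeft K P)) =
      (Fintype.card σ).multichoose k := by
  rw [← (Submodule.equivMapOfInjective _ (mul_right_injective₀ hP) _).finrank_eq,
    finrank_homogeneousSubmodule_s14]

theorem mem_map_mulLeft_homogeneousSubmodule_of_dvd {c j : ℕ} (hD : D.IsHomogeneous c)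
    (hD0 : D ≠ 0) (hDx : D ∣ x) (hx : x ∈ homogeneousSubmodule σ K (c + j)) :
    x ∈ (homogeneousSubmodule σ K j).map (LinearMap.mulLeft K D) := by
  obtain ⟨g, rfl⟩ := hDx
  exact ⟨g, (mem_homogeneousSubmodule _ _).mpr (hD.of_mul_left_s14 hD0 hx), rfl⟩

theorem eq_zero_of_dvd_of_mem_homogeneousSubmodule {c e : ℕ} (hD : D.IsHomogeneous c)
    (hDx : D ∣ x) (hx : x ∈ homogeneousSubmodule σ K e) (he : e < c) : x = 0 := by
  by_contra hx0
  obtain ⟨g, rfl⟩ := hDx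
  exact absurd (hD.le_of_mul hx hx0) (not_le.mpr he)

theorem map_mulLeft_inf_map_mulLeft_eq {a b : ℕ} (hP : P.IsHomogeneous a)
    (hQ : Q.IsHomogeneous b) (hP0 : P ≠ 0) (hQ0 : Q ≠ 0) (hPQ : IsRelPrime P Q) (j : ℕ) :
    (homogeneousSubmodule σ K (b + j)).map (LinearMap.mulLeft K P) ⊓
        (homogeneousSubmodule σ K (a + j)).map (LinearMap.mulLeft K Q) =
      (homogeneousSubmodule σ K j).map (LinearMap.mulLeft K (P * Q)) := by
  apply le_antisymm
  · rintro _ ⟨⟨r, hr, rfl⟩, ⟨s, -, hs⟩⟩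
    simp only [LinearMap.mulLeft_apply] at hs ⊢
    have hPQr : P * Q ∣ P * r := hPQ.mul_dvd (dvd_mul_right P r) ⟨s, hs.symm⟩
    refine mem_map_mulLeft_homogeneousSubmodule_of_dvd (hP.mul hQ) (mul_ne_zero hP0 hQ0) hPQr ?_
    rw [add_assoc]
    exact (mem_homogeneousSubmodule _ _).mpr (hP.mul ((mem_homogeneousSubmodule _ _).mp hr))
  · rintro _ ⟨g, hg, rfl⟩
    replace hg := (mem_homogeneousSubmodule _ _).mp hg
    refine ⟨⟨Q * g, (mem_homogeneousSubmodule _ _).mpr (hQ.mul hg), ?_⟩,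
      ⟨P * g, (mem_homogeneousSubmodule _ _).mpr (hP.mul hg), ?_⟩⟩ <;>
    simp only [LinearMap.mulLeft_apply] <;> ring

theorem map_mulLeft_inf_map_mulLeft_eq_bot {a b k : ℕ} (hP : P.IsHomogeneous a)
    (hQ : Q.IsHomogeneous b) (hPQ : IsRelPrime P Q) (hk : k < b)
    (W : Submodule K (MvPolynomial σ K)) :
    (homogeneousSubmodule σ K k).map (LinearMap.mulLeft K P) ⊓
      W.map (LinearMap.mulLeft K Q) = ⊥ := by
  refine eq_bot_iff.mpr ?_
  rintro _ ⟨⟨r, hr, rfl⟩, ⟨s, -, hs⟩⟩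
  simp only [LinearMap.mulLeft_apply] at hs ⊢
  exact eq_zero_of_dvd_of_mem_homogeneousSubmodule (hP.mul hQ)
    (hPQ.mul_dvd (dvd_mul_right P r) ⟨s, hs.symm⟩)
    ((mem_homogeneousSubmodule _ _).mpr (hP.mul ((mem_homogeneousSubmodule _ _).mp hr)))
    (by omega)

end Field

end MvPolynomial

open MvPolynomial

theorem Submodule.finrank_sup_sub_finrank_inf_of_finrank_eq {K V : Type*} [DivisionRing K]
    [AddCommGroup V] [Module K V] (V₁ V₂ : Submodule K V) [FiniteDimensional K V₁]
    [FiniteDimensional K V₂] (h : Module.finrank K V₁ = Module.finrank K V₂) :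
    Module.finrank K ↥(V₁ ⊔ V₂) - Module.finrank K ↥(V₁ ⊓ V₂) =
      2 * (Module.finrank K V₁ - Module.finrank K ↥(V₁ ⊓ V₂)) := by
  have hsum := Submodule.finrank_sup_add_finrank_inf_eq V₁ V₂
  have hle := Submodule.finrank_mono (inf_le_left : V₁ ⊓ V₂ ≤ V₁)
  omega

theorem osculating_code_equidistant_general (F : Type*) [Field F] (n d k : ℕ)
    (hkd : k < d)
    (V₁ V₂ : Submodule F (MvPolynomial (Fin (n+1)) F))
    (hV₁ : V₁ ∈ {V : Submodule F (MvPolynomial (Fin (n+1)) F) |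
        ∃ L : MvPolynomial (Fin (n+1)) F,
          L ∈ MvPolynomial.homogeneousSubmodule (Fin (n+1)) F 1 ∧ L ≠ 0 ∧
          V = (MvPolynomial.homogeneousSubmodule (Fin (n+1)) F k).map
            (LinearMap.mulLeft F (L ^ (d - k)))})
    (hV₂ : V₂ ∈ {V : Submodule F (MvPolynomial (Fin (n+1)) F) |
        ∃ L : MvPolynomial (Fin (n+1)) F,
          L ∈ MvPolynomial.homogeneousSubmodule (Fin (n+1)) F 1 ∧ L ≠ 0 ∧
          V = (MvPolynomial.homogeneousSubmodule (Fin (n+1)) F k).map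
            (LinearMap.mulLeft F (L ^ (d - k)))})
    (hne : V₁ ≠ V₂) :
    (d ≤ 2 * k →
      Module.finrank F (V₁ ⊔ V₂ : Submodule F (MvPolynomial (Fin (n+1)) F)) -
        Module.finrank F (V₁ ⊓ V₂ : Submodule F (MvPolynomial (Fin (n+1)) F)) =
      2 * ((k + n).choose n - (2 * k - d + n).choose n)) ∧
    (2 * k < d →
      Module.finrank F (V₁ ⊔ V₂ : Submodule F (MvPolynomial (Fin (n+1)) F)) -
        Module.finrank F (V₁ ⊓ V₂ : Submodule F (MvPolynomial (Fin (n+1)) F)) =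
      2 * (k + n).choose n) := by
  obtain ⟨L₁, hL₁, hL₁0, rfl⟩ := hV₁
  obtain ⟨L₂, hL₂, hL₂0, rfl⟩ := hV₂
  set m := d - k
  have hP₁ : L₁ ^ m ≠ 0 := pow_ne_zero m hL₁0
  have hP₂ : L₂ ^ m ≠ 0 := pow_ne_zero m hL₂0
  have hdeg₁ : (L₁ ^ m).IsHomogeneous m := by
    simpa using ((mem_homogeneousSubmodule _ _).mp hL₁).pow m
  have hdeg₂ : (L₂ ^ m).IsHomogeneous m := by
    simpa using ((mem_homogeneousSubmodule _ _).mp hL₂).pow m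
  have hirr₁ := irreducible_of_mem_homogeneousSubmodule_one hL₁ hL₁0
  have hirr₂ := irreducible_of_mem_homogeneousSubmodule_one hL₂ hL₂0
  have hcop : IsRelPrime (L₁ ^ m) (L₂ ^ m) := IsRelPrime.pow <| hirr₁.isRelPrime_iff_not_dvd.mpr
    fun hdvd => hne (map_mulLeft_eq_of_associated (hirr₁.associated_of_dvd hirr₂ hdvd).pow_pow _)
  have hrank : ∀ {P : MvPolynomial (Fin (n + 1)) F}, P ≠ 0 → ∀ j,
      Module.finrank F ((homogeneousSubmodule _ F j).map (LinearMap.mulLeft F P)) =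
        (j + n).choose n := fun hP j => by
    rw [finrank_map_mulLeft_homogeneousSubmodule hP, Fintype.card_fin, Nat.multichoose_eq,
      show n + 1 + j - 1 = j + n by omega, Nat.choose_symm_add]
  rw [Submodule.finrank_sup_sub_finrank_inf_of_finrank_eq _ _ (by rw [hrank hP₁, hrank hP₂]),
    hrank hP₁]
  constructor
  · intro h
    have hinf := map_mulLeft_inf_map_mulLeft_eq hdeg₁ hdeg₂ hP₁ hP₂ hcop (k - m)
    rw [Nat.add_sub_cancel' (by omega)] at hinf
    rw [hinf, hrank (mul_ne_zero hP₁ hP₂), show k - m = 2 * k - d by omega]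
  · intro h
    rw [map_mulLeft_inf_map_mulLeft_eq_bot hdeg₁ hdeg₂ hcop (by omega), finrank_bot,
      Nat.sub_zero]

theorem osculating_code_equidistant (F : Type*) [Field F] [Fintype F] (n d k : ℕ)
    (hn : 1 ≤ n) (hk : 1 ≤ k) (hkd : k < d)
    (V₁ V₂ : Submodule F (MvPolynomial (Fin (n+1)) F))
    (hV₁ : V₁ ∈ {V : Submodule F (MvPolynomial (Fin (n+1)) F) |
        ∃ L : MvPolynomial (Fin (n+1)) F,
          L ∈ MvPolynomial.homogeneousSubmodule (Fin (n+1)) F 1 ∧ L ≠ 0 ∧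
          V = (MvPolynomial.homogeneousSubmodule (Fin (n+1)) F k).map
            (LinearMap.mulLeft F (L ^ (d - k)))})
    (hV₂ : V₂ ∈ {V : Submodule F (MvPolynomial (Fin (n+1)) F) |
        ∃ L : MvPolynomial (Fin (n+1)) F,
          L ∈ MvPolynomial.homogeneousSubmodule (Fin (n+1)) F 1 ∧ L ≠ 0 ∧
          V = (MvPolynomial.homogeneousSubmodule (Fin (n+1)) F k).map
            (LinearMap.mulLeft F (L ^ (d - k)))})
    (hne : V₁ ≠ V₂) :
    (d ≤ 2 * k →
      Module.finrank F (V₁ ⊔ V₂ : Submodule F (MvPolynomial (Fin (n+1)) F)) -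
        Module.finrank F (V₁ ⊓ V₂ : Submodule F (MvPolynomial (Fin (n+1)) F)) =
      2 * ((k + n).choose n - (2 * k - d + n).choose n)) ∧
    (2 * k < d →
      Module.finrank F (V₁ ⊔ V₂ : Submodule F (MvPolynomial (Fin (n+1)) F)) -
        Module.finrank F (V₁ ⊓ V₂ : Submodule F (MvPolynomial (Fin (n+1)) F)) =
      2 * (k + n).choose n) :=
  osculating_code_equidistant_general F n d k hkd V₁ V₂ hV₁ hV₂ hne
end
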